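/- Let R be a discrete valuation ring and s₁, s₂ ∈ R, not both zero. The cokernel of the R-linear map R → R ⊕ R, r ↦ (r·s₁, r·s₂), is a torsion-free R-module if and only if the ideal generated by s₁ and s₂ is all of R (equivalently, s₁ and s₂ have no common prime factor, i.e. at least one of them is a unit). -/

import Mathlib

/-!
Torsion-freeness of the cokernel says that the line `R·(s₁, s₂)` is saturated in `R × R`:
`r • v ∈ R·(s₁, s₂)` with `r ≠ 0` forces `v ∈ R·(s₁, s₂)`. If `a s₁ + b s₂ = 1` and
`r • (x, y) = c • (s₁, s₂)`, then `r (x s₂ - y s₁) = 0`, so `x s₂ = y s₁` and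
`(x, y) = (a x + b y) • (s₁, s₂)`. Conversely, if `d` divides both, `s₁ = d t₁`, `s₂ = d t₂`,
then `d • (t₁, t₂)` lies in the line, so `(t₁, t₂) = c d • (t₁, t₂)` and `d` is a unit; in a
Bézout domain such as a DVR, `(s₁, s₂)` is generated by a common divisor. Finally, in a local
ring a comaximal pair contains a unit.
-/

/-- The `R`-linear map `R → R ⊕ R`, `r ↦ (r·s₁, r·s₂)`. -/
noncomputable def sectionsMap (R : Type*) [CommRing R] (s₁ s₂ : R) :
    R →ₗ[R] R × R :=
  (LinearMap.toSpanSingleton R R s₁).prod (LinearMap.toSpanSingleton R R s₂)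

theorem Submodule.noZeroSMulDivisors_quotient_iff {R M : Type*} [Ring R] [AddCommGroup M]
    [Module R M] (N : Submodule R M) :
    NoZeroSMulDivisors R (M ⧸ N) ↔ ∀ (r : R) (x : M), r • x ∈ N → r = 0 ∨ x ∈ N := by
  simp only [noZeroSMulDivisors_iff, (Submodule.Quotient.mk_surjective N).forall,
    ← Submodule.Quotient.mk_smul, Submodule.Quotient.mk_eq_zero]

theorem IsLocalRing.span_pair_eq_top_iff {R : Type*} [CommRing R] [IsLocalRing R] (x y : R) :
    Ideal.span {x, y} = ⊤ ↔ IsUnit x ∨ IsUnit y := by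
  constructor
  · rw [Ideal.eq_top_iff_one, Ideal.mem_span_pair]
    rintro ⟨a, b, hab⟩
    exact (isUnit_or_isUnit_of_isUnit_add (hab ▸ isUnit_one)).imp
      isUnit_of_mul_isUnit_right isUnit_of_mul_isUnit_right
  · rintro (hx | hy)
    · exact Ideal.eq_top_of_isUnit_mem _ (Ideal.subset_span (by simp)) hx
    · exact Ideal.eq_top_of_isUnit_mem _ (Ideal.subset_span (by simp)) hy

section sectionsMap

variable {R : Type*} [CommRing R] {s₁ s₂ : R}

theorem sectionsMap_apply (r : R) : sectionsMap R s₁ s₂ r = (r * s₁, r * s₂) := rfl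

theorem mem_range_sectionsMap {v : R × R} :
    v ∈ LinearMap.range (sectionsMap R s₁ s₂) ↔ ∃ c, c * s₁ = v.1 ∧ c * s₂ = v.2 := by
  simp only [LinearMap.mem_range, sectionsMap_apply, Prod.ext_iff]

theorem mk_mem_range_sectionsMap_of_isCoprime (hs : IsCoprime s₁ s₂) {x y : R}
    (hxy : x * s₂ = y * s₁) : (x, y) ∈ LinearMap.range (sectionsMap R s₁ s₂) := by
  obtain ⟨a, b, hab⟩ := hs
  refine mem_range_sectionsMap.2 ⟨a * x + b * y, ?_, ?_⟩
  · linear_combination -b * hxy + x * hab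
  · linear_combination a * hxy + y * hab

theorem noZeroSMulDivisors_cokernel_sectionsMap_of_isCoprime [IsDomain R]
    (hs : IsCoprime s₁ s₂) :
    NoZeroSMulDivisors R ((R × R) ⧸ LinearMap.range (sectionsMap R s₁ s₂)) := by
  refine (Submodule.noZeroSMulDivisors_quotient_iff _).2 fun r ⟨x, y⟩ hr => ?_
  obtain ⟨c, hcx, hcy⟩ := mem_range_sectionsMap.1 hr
  have : r * (x * s₂ - y * s₁) = 0 := by
    simp only [Prod.smul_mk, smul_eq_mul] at hcx hcy
    linear_combination hcy * s₁ - hcx * s₂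
  exact (mul_eq_zero.1 this).imp_right fun h =>
    mk_mem_range_sectionsMap_of_isCoprime hs (sub_eq_zero.1 h)

theorem isUnit_of_dvd_of_noZeroSMulDivisors_cokernel [IsDomain R]
    [NoZeroSMulDivisors R ((R × R) ⧸ LinearMap.range (sectionsMap R s₁ s₂))]
    (hs : ¬(s₁ = 0 ∧ s₂ = 0)) {d : R} (hd₁ : d ∣ s₁) (hd₂ : d ∣ s₂) : IsUnit d := by
  obtain ⟨t₁, rfl⟩ := hd₁
  obtain ⟨t₂, rfl⟩ := hd₂
  have hd : d ≠ 0 := by rintro rfl; exact hs (by simp)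
  have ht : (t₁, t₂) ≠ 0 := fun h => hs (by simp_all)
  have hdt : d • (t₁, t₂) ∈ LinearMap.range (sectionsMap R (d * t₁) (d * t₂)) :=
    mem_range_sectionsMap.2 ⟨1, by simp⟩
  obtain hd' | ⟨c, hc⟩ :=
    (Submodule.noZeroSMulDivisors_quotient_iff _).1 ‹_› d (t₁, t₂) hdt
  · exact absurd hd' hd
  refine IsUnit.of_mul_eq_one_right c (smul_left_injective R ht ?_)
  simpa [sectionsMap_apply, mul_assoc] using hc

theorem noZeroSMulDivisors_cokernel_sectionsMap_iff [IsDomain R] [IsBezout R]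
    (hs : ¬(s₁ = 0 ∧ s₂ = 0)) :
    NoZeroSMulDivisors R ((R × R) ⧸ LinearMap.range (sectionsMap R s₁ s₂)) ↔
      Ideal.span {s₁, s₂} = ⊤ := by
  constructor
  · intro
    rw [← IsBezout.span_gcd, Ideal.span_singleton_eq_top]
    exact isUnit_of_dvd_of_noZeroSMulDivisors_cokernel hs
      (IsBezout.gcd_dvd_left s₁ s₂) (IsBezout.gcd_dvd_right s₁ s₂)
  · rw [Ideal.eq_top_iff_one, Ideal.mem_span_pair]
    exact noZeroSMulDivisors_cokernel_sectionsMap_of_isCoprime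

end sectionsMap

theorem dvr_cokernel_torsionFree_iff (R : Type*) [CommRing R] [IsDomain R]
    [IsDiscreteValuationRing R] (s₁ s₂ : R) (h : ¬(s₁ = 0 ∧ s₂ = 0)) :
    (NoZeroSMulDivisors R ((R × R) ⧸ LinearMap.range (sectionsMap R s₁ s₂)) ↔
      Ideal.span {s₁, s₂} = ⊤) ∧
    (Ideal.span {s₁, s₂} = ⊤ ↔ IsUnit s₁ ∨ IsUnit s₂) :=
  ⟨noZeroSMulDivisors_cokernel_sectionsMap_iff h, IsLocalRing.span_pair_eq_top_iff s₁ s₂⟩
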